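/- arXiv:2206.02293 — 2 statements merged into one kernel-verified Lean document; each statement's English description precedes it below -/
import Mathlib

section
/- Let m ∈ (1/2)ℕ, s ∈ (1/2)ℤ and p ∈ ℤ, and let τ lie in the upper half-plane, z₁, z₂ ∉ ℤτ + ℤ, t ∈ ℂ. Then (i) Φ^{(±)[m,s]}_1(τ, z₁, z₂+pτ, t) = e^{−2πimpz₁} Φ^{(±)[m,s+mp]}_1(τ, z₁, z₂, t); (ii) Φ^{(±)[m,s]}_2(τ, z₁, z₂+pτ, t) = (±1)^p e^{−2πimpz₁} Φ^{(±)[m,s+mp]}_2(τ, z₁, z₂, t); (iii) if (±1)^p = 1 then Φ^{(±)[m,s]}(τ, z₁, z₂+pτ, t) = e^{−2πimpz₁} Φ^{(±)[m,s+mp]}(τ, z₁, z₂, t). -/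
noncomputable section

open scoped BigOperators

namespace Mock

/-- `e x = exp(2πix)` -/
def e (x : ℂ) : ℂ := Complex.exp (2 * (Real.pi : ℂ) * Complex.I * x)

/-- `qpow τ a = q^a = exp(2πiaτ)` for a real exponent `a` -/
def qpow (τ : ℂ) (a : ℝ) : ℂ := Complex.exp (2 * (Real.pi : ℂ) * Complex.I * (a : ℂ) * τ)

/-- Jacobi theta function `θ^{(ε)}_{k,m}(τ,z)` -/
def theta (ε : ℂ) (k m : ℝ) (τ z : ℂ) : ℂ :=
  ∑' j : ℤ, ε ^ j * e ((m : ℂ) * ((j : ℂ) + (k : ℂ) / (2 * (m : ℂ))) * z)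
      * qpow τ (m * ((j : ℝ) + k / (2 * m)) ^ 2)

/-- `Φ^{(ε)[m,s]}_1` -/
def Phi1 (ε : ℂ) (m s : ℝ) (τ z₁ z₂ t : ℂ) : ℂ :=
  e (-(m : ℂ) * t) * ∑' j : ℤ,
    ε ^ j * e ((m : ℂ) * (j : ℂ) * (z₁ + z₂) + (s : ℂ) * z₁)
      * qpow τ (m * (j : ℝ) ^ 2 + s * (j : ℝ)) / (1 - e z₁ * qpow τ (j : ℝ))

/-- `Φ^{(ε)[m,s]}_2` -/
def Phi2 (ε : ℂ) (m s : ℝ) (τ z₁ z₂ t : ℂ) : ℂ :=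
  e (-(m : ℂ) * t) * ∑' j : ℤ,
    ε ^ j * e (-(m : ℂ) * (j : ℂ) * (z₁ + z₂) - (s : ℂ) * z₂)
      * qpow τ (m * (j : ℝ) ^ 2 + s * (j : ℝ)) / (1 - e (-z₂) * qpow τ (j : ℝ))

/-- `Φ^{(ε)[m,s]} = Φ₁ - Φ₂` -/
def Phi (ε : ℂ) (m s : ℝ) (τ z₁ z₂ t : ℂ) : ℂ :=
  Phi1 ε m s τ z₁ z₂ t - Phi2 ε m s τ z₁ z₂ t

/-- `E(x) = 2∫₀ˣ e^{−πt²} dt` -/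
def Efun (x : ℝ) : ℝ := 2 * ∫ t in (0:ℝ)..x, Real.exp (-Real.pi * t ^ 2)

/-- `P^{(ε)}_{j,m}(τ,w)` -/
def Pfun (ε : ℂ) (j m : ℝ) (τ w : ℂ) : ℂ :=
  ∑' k : ℤ, ε ^ k *
    (Efun ((j + 2 * m * (k : ℝ) - 2 * m * (w.im / τ.im)) * Real.sqrt (τ.im / m)) : ℂ) *
    Complex.exp (-(Real.pi : ℂ) * Complex.I * τ * ((j : ℂ) + 2 * (m : ℂ) * (k : ℂ)) ^ 2 / (2 * (m : ℂ))
      + 2 * (Real.pi : ℂ) * Complex.I * ((j : ℂ) + 2 * (m : ℂ) * (k : ℂ)) * w)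

/-- `Q^{(ε)}_{j,m}(τ,w)` -/
def Qfun (ε : ℂ) (j m : ℝ) (τ w : ℂ) : ℂ :=
  ∑' k : ℤ, ε ^ k * (if 0 ≤ k then (1 : ℂ) else -1) *
    Complex.exp (-(Real.pi : ℂ) * Complex.I * τ * ((j : ℂ) + 2 * (m : ℂ) * (k : ℂ)) ^ 2 / (2 * (m : ℂ))
      + 2 * (Real.pi : ℂ) * Complex.I * ((j : ℂ) + 2 * (m : ℂ) * (k : ℂ)) * w)

/-- `R^{(ε)}_{j,m}(τ,w)`, the sum over `n = j + 2mk`, `k ∈ ℤ` -/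
def Rfun (ε : ℂ) (j m : ℝ) (τ w : ℂ) : ℂ :=
  ∑' k : ℤ, ε ^ k *
    ((Real.sign (2 * m * (k : ℝ) + 2 * m - 1 / 2) : ℂ)
      - (Efun ((j + 2 * m * (k : ℝ) - 2 * m * (w.im / τ.im)) * Real.sqrt (τ.im / m)) : ℂ)) *
    Complex.exp (-(Real.pi : ℂ) * Complex.I * τ * ((j : ℂ) + 2 * (m : ℂ) * (k : ℂ)) ^ 2 / (2 * (m : ℂ))
      + 2 * (Real.pi : ℂ) * Complex.I * ((j : ℂ) + 2 * (m : ℂ) * (k : ℂ)) * w)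

/-- correction term `Φ^{(ε)[m,s]}_{add}`; the finite sum over `k ∈ s+ℤ`, `s ≤ k < s+2m`
is parametrized by `k = s + n`, `0 ≤ n < 2m`. -/
def PhiAdd (ε : ℂ) (m s : ℝ) (τ z₁ z₂ t : ℂ) : ℂ :=
  -(1/2) * e (-(m : ℂ) * t) *
    ∑' n : ℤ, if 0 ≤ n ∧ (n : ℝ) < 2 * m then
      Rfun ε (s + (n : ℝ)) m τ ((z₁ - z₂) / 2) *
        (theta ε (s + (n : ℝ)) m τ (z₁ + z₂) - theta ε (-(s + (n : ℝ))) m τ (z₁ + z₂))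
    else 0

/-- Zwegers modification `Φ̃^{(ε)[m,s]}` -/
def PhiTilde (ε : ℂ) (m s : ℝ) (τ z₁ z₂ t : ℂ) : ℂ :=
  Phi ε m s τ z₁ z₂ t + PhiAdd ε m s τ z₁ z₂ t

/-- Dedekind eta function -/
def eta (τ : ℂ) : ℂ := qpow τ (1/24) * ∏' n : ℕ, (1 - qpow τ ((n : ℝ) + 1))

/-- Mumford theta `ϑ₁₁(τ,z) = i θ^{(−)}_{1/2,1/2}(τ,2z)` -/
def vtheta11 (τ z : ℂ) : ℂ := Complex.I * theta (-1) (1/2) (1/2) τ (2 * z)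

/-- Mumford theta `ϑ₁₀(τ,z) = θ^{(+)}_{1/2,1/2}(τ,2z)` -/
def vtheta10 (τ z : ℂ) : ℂ := theta 1 (1/2) (1/2) τ (2 * z)

/-- the half-odd integer `(2n+1)/2` -/
def hodd (n : ℕ) : ℝ := (2 * (n : ℝ) + 1) / 2

def psi1 (m : ℝ) (τ z : ℂ) : ℂ :=
  PhiTilde (-1) m (1/2) τ (z/2 + τ/2 - 1/2) (z/2 - τ/2 + 1/2) 0
def psi2 (m : ℝ) (τ z : ℂ) : ℂ :=
  PhiTilde (-1) m (1/2) τ (z/2 + τ/2) (z/2 - τ/2) 0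
def psi3 (m : ℝ) (τ z : ℂ) : ℂ :=
  PhiTilde (-1) m (1/2) τ (z/2 - 1/2) (z/2 + 1/2) 0

def Xi1 (m : ℝ) (p : ℤ) (τ z : ℂ) : ℂ :=
  qpow τ (-m/4) * theta (-1) ((2 * (p : ℝ) + 1) * m) (m + 1/2) τ 0 * psi1 m τ z
def Xi2 (m : ℝ) (p : ℤ) (τ z : ℂ) : ℂ :=
  qpow τ (-m/4) * theta 1 ((2 * (p : ℝ) + 1) * m) (m + 1/2) τ 0 * psi2 m τ z
def Xi3 (m : ℝ) (p : ℤ) (τ z : ℂ) : ℂ :=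
  theta (-1) (2 * (p : ℝ) * m) (m + 1/2) τ 0 * psi3 m τ z

def Ups1 (m : ℝ) (p : ℤ) (τ z : ℂ) : ℂ :=
  -Complex.I * eta τ ^ 3 *
    (theta (-1) ((p : ℝ) + 1/2) (m + 1/2) τ z - theta (-1) (-((p : ℝ) + 1/2)) (m + 1/2) τ z) /
    theta 1 0 (1/2) τ z
def Ups2 (m : ℝ) (p : ℤ) (τ z : ℂ) : ℂ :=
  eta τ ^ 3 *
    (theta 1 ((p : ℝ) + 1/2) (m + 1/2) τ z - theta 1 (-((p : ℝ) + 1/2)) (m + 1/2) τ z) /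
    theta (-1) 0 (1/2) τ z
def Ups3 (m : ℝ) (p : ℤ) (τ z : ℂ) : ℂ :=
  -Complex.I * eta τ ^ 3 *
    (theta (-1) (p : ℝ) (m + 1/2) τ z - theta (-1) (-(p : ℝ)) (m + 1/2) τ z) /
    theta 1 (1/2) (1/2) τ z

def G1 (m : ℝ) (p : ℤ) (τ z : ℂ) : ℂ := Xi1 m p τ z - Ups1 m p τ z
def G2 (m : ℝ) (p : ℤ) (τ z : ℂ) : ℂ := Xi2 m p τ z - Ups2 m p τ z
def G3 (m : ℝ) (p : ℤ) (τ z : ℂ) : ℂ := Xi3 m p τ z - Ups3 m p τ z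

/-- `ω^{[m]}_{j,k}(z₁,z₂,z₃)` -/
def omega (m : ℝ) (j k : ℕ) (z₁ z₂ z₃ : ℂ) : ℂ :=
  e ((j : ℂ) * (z₁ - z₂)) * e ((2 * (m : ℂ) * (j : ℂ) - (k : ℂ)) * (z₁ - 2 * z₂ - z₃) / 2)
  + e (-(j : ℂ) * (z₁ - z₂)) * e (-(2 * (m : ℂ) * (j : ℂ) - (k : ℂ)) * (z₁ - 2 * z₂ - z₃) / 2)
  - e ((j : ℂ) * (z₁ - z₂)) * e ((2 * (m : ℂ) * (j : ℂ) - (k : ℂ)) * (z₁ + z₃) / 2)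
  - e (-(j : ℂ) * (z₁ - z₂)) * e (-(2 * (m : ℂ) * (j : ℂ) - (k : ℂ)) * (z₁ + z₃) / 2)

/-- indefinite modular form `g^{(1)[m,p]}_k(τ)` (with the convention of the paper,
split according to `k = m` or `k < m`). -/
def g1 (m : ℝ) (p : ℤ) (k : ℝ) (τ : ℂ) : ℂ :=
  if k = m then
    ((∑' x : ℤ × ℤ, if 0 < x.2 ∧ x.2 ≤ x.1 then
        (-1 : ℂ) ^ x.1 * e ((m : ℂ) / 2) *
          qpow τ ((m + 1/2) * ((x.1 : ℝ) + m * (2 * (p : ℝ) + 1) / (2 * m + 1)) ^ 2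
            - m * ((x.2 : ℝ) + (p : ℝ)) ^ 2) else 0)
      - (∑' x : ℤ × ℤ, if x.1 < x.2 ∧ x.2 ≤ 0 then
        (-1 : ℂ) ^ x.1 * e ((m : ℂ) / 2) *
          qpow τ ((m + 1/2) * ((x.1 : ℝ) + m * (2 * (p : ℝ) + 1) / (2 * m + 1)) ^ 2
            - m * ((x.2 : ℝ) + (p : ℝ)) ^ 2) else 0))
    + (1/2) * e ((m : ℂ) / 2) * theta (-1) ((2 * (p : ℝ) + 1) * m) (m + 1/2) τ 0 *
        ∑ r ∈ Finset.Icc (-p) p, qpow τ (-m * (r : ℝ) ^ 2)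
  else
    ((∑' x : ℤ × ℤ, if 0 ≤ x.2 ∧ x.2 < x.1 then
        (-1 : ℂ) ^ x.1 * e ((k : ℂ) / 2) *
          qpow τ ((m + 1/2) * ((x.1 : ℝ) + m * (2 * (p : ℝ) + 1) / (2 * m + 1)) ^ 2
            - m * ((x.2 : ℝ) + (p : ℝ) + (m + k) / (2 * m)) ^ 2) else 0)
      - (∑' x : ℤ × ℤ, if x.1 ≤ x.2 ∧ x.2 < 0 then
        (-1 : ℂ) ^ x.1 * e ((k : ℂ) / 2) *
          qpow τ ((m + 1/2) * ((x.1 : ℝ) + m * (2 * (p : ℝ) + 1) / (2 * m + 1)) ^ 2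
            - m * ((x.2 : ℝ) + (p : ℝ) + (m + k) / (2 * m)) ^ 2) else 0))
    + ((∑' x : ℤ × ℤ, if 0 ≤ x.2 ∧ x.2 ≤ x.1 then
        (-1 : ℂ) ^ x.1 * e ((k : ℂ) / 2) *
          qpow τ ((m + 1/2) * ((x.1 : ℝ) + m * (2 * (p : ℝ) + 1) / (2 * m + 1)) ^ 2
            - m * ((x.2 : ℝ) + (p : ℝ) + (m - k) / (2 * m)) ^ 2) else 0)
      - (∑' x : ℤ × ℤ, if x.1 < x.2 ∧ x.2 < 0 then
        (-1 : ℂ) ^ x.1 * e ((k : ℂ) / 2) *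
          qpow τ ((m + 1/2) * ((x.1 : ℝ) + m * (2 * (p : ℝ) + 1) / (2 * m + 1)) ^ 2
            - m * ((x.2 : ℝ) + (p : ℝ) + (m - k) / (2 * m)) ^ 2) else 0))
    + e ((k : ℂ) / 2) * theta (-1) ((2 * (p : ℝ) + 1) * m) (m + 1/2) τ 0 *
        ∑ r ∈ Finset.Icc (-p + 1) p, qpow τ (-m * ((r : ℝ) + (k - m) / (2 * m)) ^ 2)

/-- indefinite modular form `g^{(2)[m,p]}_k(τ)` -/
def g2 (m : ℝ) (p : ℤ) (k : ℝ) (τ : ℂ) : ℂ :=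
  if k = m then
    -(-1 : ℂ) ^ p *
      ((∑' x : ℤ × ℤ, if 0 < x.2 ∧ x.2 ≤ x.1 then
          (-1 : ℂ) ^ x.2 *
            qpow τ ((m + 1/2) * ((x.1 : ℝ) + m * (2 * (p : ℝ) + 1) / (2 * m + 1)) ^ 2
              - m * ((x.2 : ℝ) + (p : ℝ)) ^ 2) else 0)
        - (∑' x : ℤ × ℤ, if x.1 < x.2 ∧ x.2 ≤ 0 then
          (-1 : ℂ) ^ x.2 *
            qpow τ ((m + 1/2) * ((x.1 : ℝ) + m * (2 * (p : ℝ) + 1) / (2 * m + 1)) ^ 2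
              - m * ((x.2 : ℝ) + (p : ℝ)) ^ 2) else 0))
    - (1/2) * theta 1 ((2 * (p : ℝ) + 1) * m) (m + 1/2) τ 0 *
        ∑ r ∈ Finset.Icc (-p) p, (-1 : ℂ) ^ r * qpow τ (-m * (r : ℝ) ^ 2)
  else
    (-1 : ℂ) ^ p *
      ((∑' x : ℤ × ℤ, if 0 ≤ x.2 ∧ x.2 < x.1 then
          (-1 : ℂ) ^ x.2 *
            qpow τ ((m + 1/2) * ((x.1 : ℝ) + m * (2 * (p : ℝ) + 1) / (2 * m + 1)) ^ 2
              - m * ((x.2 : ℝ) + (p : ℝ) + (m + k) / (2 * m)) ^ 2) else 0)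
        - (∑' x : ℤ × ℤ, if x.1 ≤ x.2 ∧ x.2 < 0 then
          (-1 : ℂ) ^ x.2 *
            qpow τ ((m + 1/2) * ((x.1 : ℝ) + m * (2 * (p : ℝ) + 1) / (2 * m + 1)) ^ 2
              - m * ((x.2 : ℝ) + (p : ℝ) + (m + k) / (2 * m)) ^ 2) else 0))
    - (-1 : ℂ) ^ p *
      ((∑' x : ℤ × ℤ, if 0 ≤ x.2 ∧ x.2 ≤ x.1 then
          (-1 : ℂ) ^ x.2 *
            qpow τ ((m + 1/2) * ((x.1 : ℝ) + m * (2 * (p : ℝ) + 1) / (2 * m + 1)) ^ 2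
              - m * ((x.2 : ℝ) + (p : ℝ) + (m - k) / (2 * m)) ^ 2) else 0)
        - (∑' x : ℤ × ℤ, if x.1 < x.2 ∧ x.2 < 0 then
          (-1 : ℂ) ^ x.2 *
            qpow τ ((m + 1/2) * ((x.1 : ℝ) + m * (2 * (p : ℝ) + 1) / (2 * m + 1)) ^ 2
              - m * ((x.2 : ℝ) + (p : ℝ) + (m - k) / (2 * m)) ^ 2) else 0))
    - theta 1 ((2 * (p : ℝ) + 1) * m) (m + 1/2) τ 0 *
        ∑ r ∈ Finset.Icc (-p + 1) p, (-1 : ℂ) ^ r *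
          qpow τ (-m * ((r : ℝ) + (k - m) / (2 * m)) ^ 2)

/-- indefinite modular form `g^{(3)[m,p]}_k(τ)` -/
def g3 (m : ℝ) (p : ℤ) (k : ℝ) (τ : ℂ) : ℂ :=
  if k = m then
    e ((m : ℂ) / 2) *
      ((∑' x : ℤ × ℤ, if 0 < x.2 ∧ x.2 ≤ x.1 then
          (-1 : ℂ) ^ x.1 *
            qpow τ ((m + 1/2) * ((x.1 : ℝ) + 2 * m * (p : ℝ) / (2 * m + 1)) ^ 2
              - m * ((x.2 : ℝ) - 1/2 + (p : ℝ)) ^ 2) else 0)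
        - (∑' x : ℤ × ℤ, if x.1 < x.2 ∧ x.2 ≤ 0 then
          (-1 : ℂ) ^ x.1 *
            qpow τ ((m + 1/2) * ((x.1 : ℝ) + 2 * m * (p : ℝ) / (2 * m + 1)) ^ 2
              - m * ((x.2 : ℝ) - 1/2 + (p : ℝ)) ^ 2) else 0))
    + e ((m : ℂ) / 2) * theta (-1) (2 * (p : ℝ) * m) (m + 1/2) τ 0 *
        ∑ r ∈ Finset.Icc 1 p, qpow τ (-m * (2 * (r : ℝ) - 1) ^ 2 / 4)
  else
    ((∑' x : ℤ × ℤ, if 0 ≤ x.2 ∧ x.2 < x.1 then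
        (-1 : ℂ) ^ x.1 * e ((k : ℂ) / 2) *
          qpow τ ((m + 1/2) * ((x.1 : ℝ) + 2 * m * (p : ℝ) / (2 * m + 1)) ^ 2
            - m * ((x.2 : ℝ) + (p : ℝ) + k / (2 * m)) ^ 2) else 0)
      - (∑' x : ℤ × ℤ, if x.1 ≤ x.2 ∧ x.2 < 0 then
        (-1 : ℂ) ^ x.1 * e ((k : ℂ) / 2) *
          qpow τ ((m + 1/2) * ((x.1 : ℝ) + 2 * m * (p : ℝ) / (2 * m + 1)) ^ 2
            - m * ((x.2 : ℝ) + (p : ℝ) + k / (2 * m)) ^ 2) else 0))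
    + ((∑' x : ℤ × ℤ, if 0 ≤ x.2 ∧ x.2 ≤ x.1 then
        (-1 : ℂ) ^ x.1 * e ((k : ℂ) / 2) *
          qpow τ ((m + 1/2) * ((x.1 : ℝ) + 2 * m * (p : ℝ) / (2 * m + 1)) ^ 2
            - m * ((x.2 : ℝ) + (p : ℝ) - k / (2 * m)) ^ 2) else 0)
      - (∑' x : ℤ × ℤ, if x.1 < x.2 ∧ x.2 < 0 then
        (-1 : ℂ) ^ x.1 * e ((k : ℂ) / 2) *
          qpow τ ((m + 1/2) * ((x.1 : ℝ) + 2 * m * (p : ℝ) / (2 * m + 1)) ^ 2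
            - m * ((x.2 : ℝ) + (p : ℝ) - k / (2 * m)) ^ 2) else 0))
    + e ((k : ℂ) / 2) * theta (-1) (2 * (p : ℝ) * m) (m + 1/2) τ 0 *
        ∑ r ∈ Finset.Icc (-p + 1) (p - 1), qpow τ (-(2 * m * (r : ℝ) + k) ^ 2 / (4 * m))

/-!
Both quasi-periodicities are termwise: shifting `z₂` by `pτ` multiplies the `j`-th numerator of
`Φ₁` by `e(-mpz₁) q^{mpj}`, which is absorbed by `s ↦ s + mp`; in `Φ₂` the denominator
`1 - e(-z₂ - pτ) q^j` only depends on `j - p`, so reindexing `j ↦ j + p` does the same at the cost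
of the sign `ε^p`.
-/

theorem e_add (x y : ℂ) : e (x + y) = e x * e y := by
  simp only [e, mul_add, Complex.exp_add]

theorem e_mul_qpow (x τ : ℂ) (a : ℝ) : e x * qpow τ a = e (x + a * τ) := by
  rw [e, qpow, e, ← Complex.exp_add]
  ring_nf

theorem Phi1_add_int_mul (ε : ℂ) (m s : ℝ) (p : ℤ) (τ z₁ z₂ t : ℂ) :
    Phi1 ε m s τ z₁ (z₂ + p * τ) t = e (-m * p * z₁) * Phi1 ε m (s + m * p) τ z₁ z₂ t := by
  unfold Phi1
  rw [mul_left_comm (e _), ← tsum_mul_left (a := e (-m * p * z₁))]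
  congr 1
  refine tsum_congr fun j => ?_
  have hnum : e (m * j * (z₁ + (z₂ + p * τ)) + s * z₁) * qpow τ (m * j ^ 2 + s * j)
      = e (-m * p * z₁) * (e (m * j * (z₁ + z₂) + ((s + m * p : ℝ) : ℂ) * z₁)
        * qpow τ (m * j ^ 2 + (s + m * p) * j)) := by
    rw [e_mul_qpow, e_mul_qpow, ← e_add]
    congr 1
    push_cast
    ring
  rw [mul_assoc (ε ^ j), hnum]
  ring

theorem Phi2_add_int_mul {ε : ℂ} (hε : ε ≠ 0) (m s : ℝ) (p : ℤ) (τ z₁ z₂ t : ℂ) :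
    Phi2 ε m s τ z₁ (z₂ + p * τ) t
      = ε ^ p * e (-m * p * z₁) * Phi2 ε m (s + m * p) τ z₁ z₂ t := by
  unfold Phi2
  rw [mul_left_comm (ε ^ p * _), ← tsum_mul_left (a := ε ^ p * e (-m * p * z₁)),
    ← (Equiv.addRight p).tsum_eq]
  congr 1
  refine tsum_congr fun j => ?_
  have hden : e (-(z₂ + p * τ)) * qpow τ ((j + p : ℤ) : ℝ) = e (-z₂) * qpow τ (j : ℝ) := by
    rw [e_mul_qpow, e_mul_qpow]
    congr 1
    push_cast
    ring
  have hnum : e (-m * ((j + p : ℤ) : ℂ) * (z₁ + (z₂ + p * τ)) - s * (z₂ + p * τ))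
        * qpow τ (m * ((j + p : ℤ) : ℝ) ^ 2 + s * ((j + p : ℤ) : ℝ))
      = e (-m * p * z₁) * (e (-m * j * (z₁ + z₂) - ((s + m * p : ℝ) : ℂ) * z₂)
        * qpow τ (m * j ^ 2 + (s + m * p) * j)) := by
    rw [e_mul_qpow, e_mul_qpow, ← e_add]
    congr 1
    push_cast
    ring
  rw [Equiv.coe_addRight, hden, mul_assoc (ε ^ (j + p)), hnum, zpow_add₀ hε]
  ring

theorem Phi_add_int_mul {ε : ℂ} (hε : ε ≠ 0) (m s : ℝ) {p : ℤ} (hp : ε ^ p = 1)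
    (τ z₁ z₂ t : ℂ) :
    Phi ε m s τ z₁ (z₂ + p * τ) t = e (-m * p * z₁) * Phi ε m (s + m * p) τ z₁ z₂ t := by
  rw [Phi, Phi, Phi1_add_int_mul, Phi2_add_int_mul hε, hp]
  ring

theorem statement0_general (m s : ℝ) (p : ℤ)
    (τ : ℂ) (z₁ z₂ t : ℂ)
    (ε : ℂ) (hε : ε = 1 ∨ ε = -1) :
    Phi1 ε m s τ z₁ (z₂ + (p : ℂ) * τ) t
        = e (-(m : ℂ) * (p : ℂ) * z₁) * Phi1 ε m (s + m * (p : ℝ)) τ z₁ z₂ t ∧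
    Phi2 ε m s τ z₁ (z₂ + (p : ℂ) * τ) t
        = ε ^ p * e (-(m : ℂ) * (p : ℂ) * z₁) * Phi2 ε m (s + m * (p : ℝ)) τ z₁ z₂ t ∧
    (ε ^ p = 1 →
      Phi ε m s τ z₁ (z₂ + (p : ℂ) * τ) t
        = e (-(m : ℂ) * (p : ℂ) * z₁) * Phi ε m (s + m * (p : ℝ)) τ z₁ z₂ t) := by
  have hε₀ : ε ≠ 0 := by rcases hε with rfl | rfl <;> norm_num
  exact ⟨Phi1_add_int_mul ε m s p τ z₁ z₂ t, Phi2_add_int_mul hε₀ m s p τ z₁ z₂ t,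
    fun hp => Phi_add_int_mul hε₀ m s hp τ z₁ z₂ t⟩

theorem statement0 (m s : ℝ) (hm : ∃ n : ℕ, 0 < n ∧ m = (n : ℝ) / 2)
    (hs : ∃ n : ℤ, s = (n : ℝ) / 2) (p : ℤ)
    (τ : ℂ) (hτ : 0 < τ.im) (z₁ z₂ t : ℂ)
    (hz₁ : ∀ a b : ℤ, z₁ ≠ (a : ℂ) * τ + (b : ℂ))
    (hz₂ : ∀ a b : ℤ, z₂ ≠ (a : ℂ) * τ + (b : ℂ))
    (ε : ℂ) (hε : ε = 1 ∨ ε = -1) :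
    Phi1 ε m s τ z₁ (z₂ + (p : ℂ) * τ) t
        = e (-(m : ℂ) * (p : ℂ) * z₁) * Phi1 ε m (s + m * (p : ℝ)) τ z₁ z₂ t ∧
    Phi2 ε m s τ z₁ (z₂ + (p : ℂ) * τ) t
        = ε ^ p * e (-(m : ℂ) * (p : ℂ) * z₁) * Phi2 ε m (s + m * (p : ℝ)) τ z₁ z₂ t ∧
    (ε ^ p = 1 →
      Phi ε m s τ z₁ (z₂ + (p : ℂ) * τ) t
        = e (-(m : ℂ) * (p : ℂ) * z₁) * Phi ε m (s + m * (p : ℝ)) τ z₁ z₂ t) :=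
  statement0_general m s p τ z₁ z₂ t ε hε

end Mock
end
end

section
/- Let m, j, k ∈ (1/2)ℤ_odd ∩ (1/2)ℕ with 0 < j ≤ m and 0 < k ≤ m, where m ∈ (1/2)ℕ_odd. Then Σ_{ℓ ∈ (1/2)ℤ_odd, 0<ℓ<m} sin(πjℓ/m) sin(πkℓ/m) + (1/2) sin(πj) sin(πk) = (m/2) c_j δ_{j,k}, where c_j := 1 if j < m and c_j := 2 if j = m, and δ_{j,k} is the Kronecker delta. -/
noncomputable section

open scoped BigOperators

namespace Mock

/-!
Write `N = 2M + 1`, `m = N/2`, `j = J/2`, `k = K/2`. By the product-to-sum formula the left-hand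
side is `(C(x₋) - C(x₊))/2`, where `x_∓ = π(J ∓ K)/(2N)` and
`C(x) = ∑_{n<M} cos((2n+1)x) + cos((2M+1)x)/2` is `oddCosSum M x`. Multiplying `C` by `2 sin x`
telescopes, as `2 sin x cos((2n+1)x) = sin((2n+2)x) - sin(2nx)`, so `C(x) = 0` whenever
`sin x ≠ 0` and `sin((2M+1)x) = 0`. For odd `J, K ≤ N` both conditions hold at `x_∓` except at
`x = 0`, where `C = N/2`, and at `x = π` (when `J = K = N`), where `C = -N/2`.
-/

section OddCosSum

open Real Finset

def oddCosSum (M : ℕ) (x : ℝ) : ℝ :=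
  ∑ n ∈ range M, cos ((2 * n + 1) * x) + cos ((2 * M + 1) * x) / 2

theorem two_mul_sin_mul_sum_cos_odd_mul (M : ℕ) (x : ℝ) :
    2 * sin x * ∑ n ∈ range M, cos ((2 * n + 1) * x) = sin (2 * M * x) := by
  induction M with
  | zero => simp
  | succ M ih =>
    rw [sum_range_succ, mul_add, ih, two_mul_sin_mul_cos,
      show x - (2 * M + 1) * x = -(2 * M * x) by ring, sin_neg]
    push_cast
    ring_nf

theorem oddCosSum_eq_zero {M : ℕ} {x : ℝ} (hx : sin x ≠ 0) (hM : sin ((2 * M + 1) * x) = 0) :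
    oddCosSum M x = 0 := by
  have hshift : sin (2 * M * x) = -cos ((2 * M + 1) * x) * sin x := by
    rw [show 2 * (M : ℝ) * x = (2 * M + 1) * x - x by ring, sin_sub, hM]
    ring
  apply mul_left_cancel₀ (mul_ne_zero two_ne_zero hx)
  rw [oddCosSum, mul_add, two_mul_sin_mul_sum_cos_odd_mul, hshift]
  ring

theorem oddCosSum_zero (M : ℕ) : oddCosSum M 0 = (2 * M + 1) / 2 := by
  simp [oddCosSum]
  ring

theorem oddCosSum_pi (M : ℕ) : oddCosSum M π = -(2 * M + 1) / 2 := by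
  have hcos : ∀ n : ℕ, cos ((2 * n + 1) * π) = -1 := fun n => by
    rw [show (2 * n + 1) * π = n * (2 * π) + π by ring, cos_nat_mul_two_pi_add_pi]
  simp only [oddCosSum, hcos, sum_const, card_range, nsmul_eq_mul]
  ring

theorem oddCosSum_pi_mul_div_eq_zero {M : ℕ} {d : ℤ} (hd : Even d) (hd0 : d ≠ 0)
    (hdM : |d| < 2 * (2 * M + 1)) : oddCosSum M (π * d / (2 * (2 * M + 1))) = 0 := by
  have hN : (0 : ℝ) < 2 * (2 * M + 1) := by positivity
  have hdM' : |(d : ℝ)| < 2 * (2 * M + 1) := by exact_mod_cast hdM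
  rw [abs_lt] at hdM'
  apply oddCosSum_eq_zero
  · rw [Ne, sin_eq_zero_iff_of_lt_of_lt]
    · simpa [pi_ne_zero, hN.ne'] using hd0
    · rw [lt_div_iff₀ hN]; nlinarith [pi_pos]
    · rw [div_lt_iff₀ hN]; nlinarith [pi_pos]
  · obtain ⟨e, rfl⟩ := hd
    rw [show (2 * M + 1) * (π * ((e + e : ℤ) : ℝ) / (2 * (2 * M + 1))) = e * π by
      push_cast; field_simp; ring]
    exact sin_int_mul_pi e

theorem sum_sin_mul_sin_odd_mul (M : ℕ) (α β : ℝ) :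
    ∑ n ∈ range M, sin ((2 * n + 1) * α) * sin ((2 * n + 1) * β)
        + sin ((2 * M + 1) * α) * sin ((2 * M + 1) * β) / 2
      = (oddCosSum M (α - β) - oddCosSum M (α + β)) / 2 := by
  have hprod : ∀ a b : ℝ, sin a * sin b = (cos (a - b) - cos (a + b)) / 2 := fun a b => by
    rw [← two_mul_sin_mul_sin]; ring
  simp only [oddCosSum, hprod, ← sum_div, sum_sub_distrib, mul_sub, mul_add]
  ring

theorem sum_sin_mul_sin_hodd (M J K : ℕ) :
    ∑ n ∈ range M, sin (π * ((J : ℝ) / 2) * hodd n / (((2 * M + 1 : ℕ) : ℝ) / 2))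
        * sin (π * ((K : ℝ) / 2) * hodd n / (((2 * M + 1 : ℕ) : ℝ) / 2))
        + 1 / 2 * sin (π * ((J : ℝ) / 2)) * sin (π * ((K : ℝ) / 2))
      = (oddCosSum M (π * ((J - K : ℤ) : ℝ) / (2 * (2 * M + 1)))
          - oddCosSum M (π * ((J + K : ℤ) : ℝ) / (2 * (2 * M + 1)))) / 2 := by
  have hterm : ∀ (I n : ℕ), π * ((I : ℝ) / 2) * hodd n / (((2 * M + 1 : ℕ) : ℝ) / 2)
      = (2 * n + 1) * (π * I / (2 * (2 * M + 1))) := fun I n => by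
    rw [hodd]; push_cast; field_simp
  have hhalf : ∀ I : ℕ, π * ((I : ℝ) / 2) = (2 * M + 1) * (π * I / (2 * (2 * M + 1))) :=
    fun I => by field_simp
  simp only [hterm]
  rw [mul_assoc, one_div_mul_eq_div, hhalf J, hhalf K, sum_sin_mul_sin_odd_mul]
  push_cast
  ring_nf

theorem oddCosSum_sub_oddCosSum_odd {M J K : ℕ} (hJ : Odd J) (hK : Odd K)
    (hJN : J ≤ 2 * M + 1) (hKN : K ≤ 2 * M + 1) :
    (oddCosSum M (π * ((J - K : ℤ) : ℝ) / (2 * (2 * M + 1)))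
        - oddCosSum M (π * ((J + K : ℤ) : ℝ) / (2 * (2 * M + 1)))) / 2
      = (2 * M + 1) / 4 * (if J = 2 * M + 1 then 2 else 1) * (if J = K then 1 else 0) := by
  have hJK_add : Even ((J : ℤ) + K) := hJ.natCast.add_odd hK.natCast
  have hJ0 := hJ.pos
  rcases eq_or_ne J K with rfl | hJK
  · rw [sub_self, Int.cast_zero, mul_zero, zero_div, oddCosSum_zero]
    rcases hJN.eq_or_lt with rfl | hJlt
    · rw [show π * (((2 * M + 1 : ℕ) + (2 * M + 1 : ℕ) : ℤ) : ℝ) / (2 * (2 * M + 1)) = π by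
          push_cast; field_simp; ring, oddCosSum_pi]
      simp only [if_true]
      ring
    · rw [oddCosSum_pi_mul_div_eq_zero hJK_add (by omega) (abs_lt.mpr ⟨by omega, by omega⟩)]
      simp only [hJlt.ne, if_false, if_true]
      ring
  · rw [oddCosSum_pi_mul_div_eq_zero (hJ.natCast.sub_odd hK.natCast) (by omega)
      (abs_lt.mpr ⟨by omega, by omega⟩), oddCosSum_pi_mul_div_eq_zero hJK_add (by omega)
      (abs_lt.mpr ⟨by omega, by omega⟩)]
    simp [hJK]

end OddCosSum

theorem statement17 (N J K : ℕ) (hN : Odd N) (hJ : Odd J) (hK : Odd K)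
    (m j k : ℝ) (hm : m = (N : ℝ) / 2) (hj : j = (J : ℝ) / 2) (hk : k = (K : ℝ) / 2)
    (hjm : 0 < j ∧ j ≤ m) (hkm : 0 < k ∧ k ≤ m) :
    (∑ n ∈ Finset.range ((N - 1) / 2),
        Real.sin (Real.pi * j * hodd n / m) * Real.sin (Real.pi * k * hodd n / m))
      + (1/2) * Real.sin (Real.pi * j) * Real.sin (Real.pi * k)
    = (m / 2) * (if j = m then 2 else 1) * (if j = k then 1 else 0) := by
  obtain ⟨M, rfl⟩ := hN
  subst hm hj hk
  have hJN : J ≤ 2 * M + 1 := by exact_mod_cast (div_le_div_iff_of_pos_right two_pos).mp hjm.2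
  have hKN : K ≤ 2 * M + 1 := by exact_mod_cast (div_le_div_iff_of_pos_right two_pos).mp hkm.2
  have hhalf_inj : ∀ a b : ℕ, ((a : ℝ) / 2 = (b : ℝ) / 2) ↔ a = b := by simp
  rw [show (2 * M + 1 - 1) / 2 = M by omega, sum_sin_mul_sin_hodd,
    oddCosSum_sub_oddCosSum_odd hJ hK hJN hKN]
  simp only [hhalf_inj]
  push_cast
  ring

end Mock
end
end
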